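/- For each λ ∈ (0,1], let g_λ(c) = c·(1 − e^{−(c·Γ(2−λ))^{−1/λ}}), let η(λ) be the unique positive solution of e^x = 1 + x/λ, and let λ* be the unique root in (0,1] of 1 − (1 + Γ(2−λ)^{−1/λ}/λ)·e^{−Γ(2−λ)^{−1/λ}} = 0. If 0 < λ ≤ λ*, then sup_{c∈[0,1]} g_λ(c) = sup_{c≥0} g_λ(c) = η(λ)^{1−λ}/(Γ(2−λ)·(λ + η(λ))). If λ* ≤ λ ≤ 1, then sup_{c∈[0,1]} g_λ(c) = g_λ(1) = 1 − e^{−Γ(2−λ)^{−1/λ}}. -/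

import Mathlib

/-!
Substituting `u = (c Γ(2-λ))^(-1/λ)` turns `g_λ(c)` into `f(u) / Γ(2-λ)` with
`f(u) = u^(-λ) (1 - e^(-u))`, and `f'(u)` has the sign of `1 + u/λ - e^u`. By strict convexity of
`exp`, this is positive on `(0, η)` and negative on `(η, ∞)`, so `f` peaks at `u = η`, i.e. at
`c* = η^(-λ) / Γ(2-λ)`. As `c ≤ 1` iff `u ≥ u₁ := Γ(2-λ)^(-1/λ)`, the supremum over `[0,1]` is
attained at `c*` when `u₁ ≤ η` and at `c = 1` when `η ≤ u₁`.

Since `ξ(λ) = e^(-u₁) (e^u₁ - 1 - u₁/λ)`, the same convexity shows that `u₁ ≤ η` iff `ξ(λ) ≤ 0`.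
Log-convexity of `Γ` gives `1 ≤ u₁ ≤ 2`, hence `ξ < 0` on `(0, 1/8]`, while `ξ(1) > 0`; by the
intermediate value theorem and uniqueness of the root `λ*`, `ξ ≤ 0` on `(0, λ*]` and `ξ ≥ 0` on
`[λ*, 1]`.
-/

open Real Set

/-- `g_λ(c) = c·(1 − e^{−(c·Γ(2−λ))^{−1/λ}})`. -/
noncomputable def gLam (lam : ℝ) (c : ℝ) : ℝ :=
  c * (1 - Real.exp (-((c * Real.Gamma (2 - lam)) ^ (-(1 : ℝ) / lam))))

/-- `ξ(λ) = 1 − (1 + Γ(2−λ)^{−1/λ}/λ)·e^{−Γ(2−λ)^{−1/λ}}`. -/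
noncomputable def xi (lam : ℝ) : ℝ :=
  1 - (1 + Real.Gamma (2 - lam) ^ (-(1 : ℝ) / lam) / lam) *
        Real.exp (-(Real.Gamma (2 - lam) ^ (-(1 : ℝ) / lam)))

theorem mem_Ioo_of_unique_preimage {α δ : Type*} [ConditionallyCompleteLinearOrder α]
    [TopologicalSpace α] [OrderTopology α] [DenselyOrdered α] [LinearOrder δ]
    [TopologicalSpace δ] [OrderClosedTopology δ] {f : α → δ} {a b z : α} {y : δ} (hab : a ≤ b)
    (hf : ContinuousOn f (Icc a b)) (ha : f a < y) (hb : y < f b)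
    (hz : ∀ x ∈ Icc a b, f x = y → x = z) : z ∈ Ioo a b := by
  obtain ⟨x, hx, hfx⟩ := intermediate_value_Ioo hab hf ⟨ha, hb⟩
  exact hz x (Ioo_subset_Icc_self hx) hfx ▸ hx

theorem exp_lt_one_add_div_of_lt {lam η u : ℝ} (heta : exp η = 1 + η / lam) (hu : 0 < u)
    (huη : u < η) : exp u < 1 + u / lam := by
  have hconv := strictConvexOn_exp.secant_strict_mono_aux1 (mem_univ 0) (mem_univ η) hu huη
  rw [exp_zero, heta] at hconv
  have key : η * exp u < η * (1 + u / lam) := by linear_combination hconv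
  exact lt_of_mul_lt_mul_left key (hu.trans huη).le

theorem one_add_div_lt_exp_of_lt {lam η u : ℝ} (hη : 0 < η) (heta : exp η = 1 + η / lam)
    (hηu : η < u) : 1 + u / lam < exp u := by
  have hconv := strictConvexOn_exp.secant_strict_mono_aux1 (mem_univ 0) (mem_univ u) hη hηu
  rw [exp_zero, heta] at hconv
  have key : η * (1 + u / lam) < η * exp u := by linear_combination hconv
  exact lt_of_mul_lt_mul_left key hη.le

theorem Gamma_two_sub_pos {lam : ℝ} (h : lam < 2) : 0 < Gamma (2 - lam) :=
  Gamma_pos_of_pos (by linarith)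

theorem log_Gamma_two_sub_nonpos {lam : ℝ} (h0 : 0 ≤ lam) (h1 : lam ≤ 1) :
    log (Gamma (2 - lam)) ≤ 0 := by
  have hconv := convexOn_log_Gamma.2 (x := 1) (y := 2) (by norm_num) (by norm_num) h0
    (sub_nonneg.2 h1) (by ring)
  simpa only [smul_eq_mul, Function.comp_apply, Gamma_one, Gamma_two, log_one, mul_zero,
    add_zero, show lam * 1 + (1 - lam) * 2 = 2 - lam by ring] using hconv

theorem neg_mul_log_two_le_log_Gamma_two_sub {lam : ℝ} (h0 : 0 ≤ lam) (h2 : lam < 2) :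
    -(lam * log 2) ≤ log (Gamma (2 - lam)) := by
  have h1 : 0 < 1 + lam := by linarith
  have hconv := convexOn_log_Gamma.2 (x := 2 - lam) (y := 3) (by rw [mem_Ioi]; linarith)
    (by norm_num) (div_nonneg zero_le_one h1.le) (div_nonneg h0 h1.le) (by field_simp)
  have hmid : 1 / (1 + lam) * (2 - lam) + lam / (1 + lam) * 3 = 2 := by field_simp; ring
  have hG3 : Gamma 3 = 2 := by simp
  simp only [smul_eq_mul, hmid, Function.comp_apply, Gamma_two, log_one, hG3] at hconv
  rw [div_mul_eq_mul_div, div_mul_eq_mul_div, ← add_div, le_div_iff₀ h1] at hconv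
  linarith

noncomputable def gLamArg (lam c : ℝ) : ℝ := (c * Gamma (2 - lam)) ^ (-(1 : ℝ) / lam)

theorem gLamArg_one_eq_exp {lam : ℝ} (h2 : lam < 2) :
    gLamArg lam 1 = exp (-log (Gamma (2 - lam)) / lam) := by
  rw [gLamArg, one_mul, rpow_def_of_pos (Gamma_two_sub_pos h2)]
  ring_nf

theorem one_le_gLamArg_one {lam : ℝ} (h0 : 0 < lam) (h1 : lam ≤ 1) : 1 ≤ gLamArg lam 1 := by
  rw [gLamArg_one_eq_exp (by linarith), one_le_exp_iff]
  exact div_nonneg (neg_nonneg.2 (log_Gamma_two_sub_nonpos h0.le h1)) h0.le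

theorem gLamArg_one_le_two {lam : ℝ} (h0 : 0 < lam) (h2 : lam < 2) : gLamArg lam 1 ≤ 2 := by
  rw [gLamArg_one_eq_exp h2]
  calc exp (-log (Gamma (2 - lam)) / lam) ≤ exp (log 2) := by
        rw [exp_le_exp, div_le_iff₀ h0]
        linarith [neg_mul_log_two_le_log_Gamma_two_sub h0.le h2]
    _ = 2 := exp_log two_pos

theorem xi_eq_exp_neg_mul (lam : ℝ) :
    xi lam = exp (-gLamArg lam 1) * (exp (gLamArg lam 1) - (1 + gLamArg lam 1 / lam)) := by
  rw [xi, gLamArg, one_mul, mul_sub, ← exp_add, neg_add_cancel, exp_zero]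
  ring

theorem xi_neg_of_le {lam : ℝ} (h0 : 0 < lam) (h : lam ≤ 1 / 8) : xi lam < 0 := by
  rw [xi_eq_exp_neg_mul]
  refine mul_neg_of_pos_of_neg (exp_pos _) (sub_neg.2 ?_)
  have hu1 := one_le_gLamArg_one h0 (by linarith)
  have he2 : exp 2 < 8 := by
    have := exp_one_lt_d9
    rw [show (2 : ℝ) = 1 + 1 by norm_num, exp_add]
    nlinarith [exp_pos 1]
  calc exp (gLamArg lam 1) ≤ exp 2 := exp_le_exp.2 (gLamArg_one_le_two h0 (by linarith))
    _ < 8 := he2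
    _ ≤ 1 / lam := by rw [le_div_iff₀ h0]; linarith
    _ ≤ gLamArg lam 1 / lam := by gcongr
    _ < 1 + gLamArg lam 1 / lam := lt_one_add _

theorem xi_one_pos : 0 < xi 1 := by
  have hu : gLamArg 1 1 = 1 := by norm_num [gLamArg]
  rw [xi_eq_exp_neg_mul, hu]
  refine mul_pos (exp_pos _) (sub_pos.2 ?_)
  linarith [add_one_lt_exp one_ne_zero]

theorem continuousOn_xi : ContinuousOn xi (Ioo 0 2) := by
  intro lam hlam
  have hG : ContinuousAt (fun l : ℝ => Gamma (2 - l)) lam :=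
    ((differentiableAt_Gamma fun m => by linarith [hlam.2, (m.cast_nonneg : (0 : ℝ) ≤ m)]
      ).continuousAt.comp (continuousAt_const.sub continuousAt_id))
  have hu : ContinuousAt (fun l : ℝ => Gamma (2 - l) ^ (-(1 : ℝ) / l)) lam :=
    hG.rpow (continuousAt_const.div continuousAt_id hlam.1.ne')
      (Or.inl (Gamma_two_sub_pos hlam.2).ne')
  unfold xi
  exact (continuousAt_const.sub ((continuousAt_const.add (hu.div continuousAt_id hlam.1.ne')).mul
    (continuous_exp.continuousAt.comp hu.neg))).continuousWithinAt

theorem xi_nonpos_of_le {lam lamstar : ℝ} (hlam : lam ∈ Ioc 0 1)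
    (hlsu : ∀ l ∈ Ioc (0 : ℝ) 1, xi l = 0 → l = lamstar) (h : lam ≤ lamstar) : xi lam ≤ 0 := by
  by_contra! hpos
  have hlarge : 1 / 8 < lam := by
    by_contra! hsmall
    exact (xi_neg_of_le hlam.1 hsmall).not_gt hpos
  have hmem := mem_Ioo_of_unique_preimage hlarge.le
    (continuousOn_xi.mono fun x hx => ⟨by linarith [hx.1], by linarith [hx.2, hlam.2]⟩)
    (xi_neg_of_le (by norm_num) le_rfl) hpos
    (fun x hx => hlsu x ⟨by linarith [hx.1], hx.2.trans hlam.2⟩)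
  linarith [hmem.2]

theorem xi_nonneg_of_ge {lam lamstar : ℝ} (hlam : lam ∈ Ioc 0 1)
    (hlsu : ∀ l ∈ Ioc (0 : ℝ) 1, xi l = 0 → l = lamstar) (h : lamstar ≤ lam) : 0 ≤ xi lam := by
  by_contra! hneg
  have hmem := mem_Ioo_of_unique_preimage hlam.2
    (continuousOn_xi.mono fun x hx => ⟨hlam.1.trans_le hx.1, by linarith [hx.2]⟩) hneg xi_one_pos
    (fun x hx => hlsu x ⟨hlam.1.trans_le hx.1, hx.2⟩)
  linarith [hmem.1]

noncomputable def fLam (lam u : ℝ) : ℝ := u ^ (-lam) * (1 - exp (-u))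

theorem fLam_nonneg (lam : ℝ) {u : ℝ} (hu : 0 ≤ u) : 0 ≤ fLam lam u :=
  mul_nonneg (rpow_nonneg hu _) (sub_nonneg.2 (exp_le_one_iff.2 (neg_nonpos.2 hu)))

theorem hasDerivAt_fLam {lam u : ℝ} (hlam : lam ≠ 0) (hu : 0 < u) :
    HasDerivAt (fLam lam) (lam * u ^ (-lam - 1) * exp (-u) * (1 + u / lam - exp u)) u := by
  have hpow : HasDerivAt (fun x : ℝ => x ^ (-lam)) (-lam * u ^ (-lam - 1)) u :=
    hasDerivAt_rpow_const (Or.inl hu.ne')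
  have hexp : HasDerivAt (fun x : ℝ => 1 - exp (-x)) (exp (-u)) u := by
    simpa using ((hasDerivAt_neg u).exp).const_sub 1
  refine (hpow.mul hexp).congr_deriv ?_
  have hu_pow : u ^ (-lam) = u ^ (-lam - 1) * u := by
    rw [← rpow_add_one hu.ne', sub_add_cancel]
  have hexp_inv : exp (-u) * exp u = 1 := by rw [← exp_add, neg_add_cancel, exp_zero]
  rw [hu_pow]
  field_simp
  linear_combination lam * hexp_inv

theorem strictMonoOn_fLam {lam η : ℝ} (hlam : 0 < lam) (heta : exp η = 1 + η / lam) :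
    StrictMonoOn (fLam lam) (Ioc 0 η) := by
  refine strictMonoOn_of_deriv_pos (convex_Ioc 0 η)
    (fun u hu => (hasDerivAt_fLam hlam.ne' hu.1).continuousAt.continuousWithinAt) ?_
  rw [interior_Ioc]
  intro u hu
  rw [(hasDerivAt_fLam hlam.ne' hu.1).deriv]
  have hpow := rpow_pos_of_pos hu.1 (-lam - 1)
  have hexp := exp_pos (-u)
  have hsign : 0 < 1 + u / lam - exp u := sub_pos.2 (exp_lt_one_add_div_of_lt heta hu.1 hu.2)
  positivity

theorem strictAntiOn_fLam {lam η : ℝ} (hlam : 0 < lam) (hη : 0 < η)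
    (heta : exp η = 1 + η / lam) : StrictAntiOn (fLam lam) (Ici η) := by
  refine strictAntiOn_of_deriv_neg (convex_Ici η)
    (fun u hu => (hasDerivAt_fLam hlam.ne' (hη.trans_le hu)).continuousAt.continuousWithinAt) ?_
  rw [interior_Ici]
  intro u hu
  have hu0 : 0 < u := hη.trans hu
  rw [(hasDerivAt_fLam hlam.ne' hu0).deriv]
  refine mul_neg_of_pos_of_neg (by positivity) ?_
  linarith [one_add_div_lt_exp_of_lt hη heta hu]

theorem isMaxOn_fLam {lam η : ℝ} (hlam : 0 < lam) (hη : 0 < η)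
    (heta : exp η = 1 + η / lam) : IsMaxOn (fLam lam) (Ici 0) η := by
  intro u (hu : 0 ≤ u)
  rcases hu.eq_or_lt with rfl | hu
  · simpa [fLam] using fLam_nonneg lam hη.le
  rcases le_total u η with h | h
  · exact (strictMonoOn_fLam hlam heta).monotoneOn ⟨hu, h⟩ ⟨hη, le_rfl⟩ h
  · exact (strictAntiOn_fLam hlam hη heta).antitoneOn self_mem_Ici h h

theorem fLam_eq_of_exp_eq {lam η : ℝ} (hlam : 0 < lam) (hη : 0 < η)
    (heta : exp η = 1 + η / lam) : fLam lam η = η ^ (1 - lam) / (lam + η) := by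
  have hexp : exp (-η) = lam / (lam + η) := by
    rw [exp_neg, heta]
    field_simp
  rw [fLam, hexp, rpow_sub hη, rpow_one, rpow_neg hη.le]
  field_simp
  ring

theorem rpow_gLamArg {lam c : ℝ} (hlam : lam ≠ 0) (h2 : lam < 2) (hc : 0 ≤ c) :
    gLamArg lam c ^ (-lam) = c * Gamma (2 - lam) := by
  rw [gLamArg, ← rpow_mul (mul_nonneg hc (Gamma_two_sub_pos h2).le),
    show -(1 : ℝ) / lam * -lam = 1 by field_simp, rpow_one]

theorem gLamArg_rpow_neg_div {lam u : ℝ} (hlam : lam ≠ 0) (h2 : lam < 2) (hu : 0 ≤ u) :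
    gLamArg lam (u ^ (-lam) / Gamma (2 - lam)) = u := by
  rw [gLamArg, div_mul_cancel₀ _ (Gamma_two_sub_pos h2).ne', ← rpow_mul hu,
    show -lam * (-(1 : ℝ) / lam) = 1 by field_simp, rpow_one]

theorem gLamArg_pos {lam c : ℝ} (h2 : lam < 2) (hc : 0 < c) : 0 < gLamArg lam c :=
  rpow_pos_of_pos (mul_pos hc (Gamma_two_sub_pos h2)) _

theorem gLamArg_le_gLamArg {lam c c' : ℝ} (hlam : 0 < lam) (h2 : lam < 2) (hc : 0 < c)
    (hcc' : c ≤ c') : gLamArg lam c' ≤ gLamArg lam c := by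
  have hG := Gamma_two_sub_pos h2
  exact rpow_le_rpow_of_nonpos (mul_pos hc hG) (by gcongr)
    (div_nonpos_of_nonpos_of_nonneg (by norm_num) hlam.le)

theorem gLam_eq_fLam {lam c : ℝ} (hlam : lam ≠ 0) (h2 : lam < 2) (hc : 0 ≤ c) :
    gLam lam c = fLam lam (gLamArg lam c) / Gamma (2 - lam) := by
  rw [fLam, rpow_gLamArg hlam h2 hc, gLam, gLamArg]
  field_simp [(Gamma_two_sub_pos h2).ne']

theorem gLam_rpow_neg_div_of_exp_eq {lam η : ℝ} (hlam : 0 < lam) (h2 : lam < 2) (hη : 0 < η)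
    (heta : exp η = 1 + η / lam) :
    gLam lam (η ^ (-lam) / Gamma (2 - lam)) = η ^ (1 - lam) / (Gamma (2 - lam) * (lam + η)) := by
  rw [gLam_eq_fLam hlam.ne' h2 (div_nonneg (rpow_nonneg hη.le _) (Gamma_two_sub_pos h2).le),
    gLamArg_rpow_neg_div hlam.ne' h2 hη.le, fLam_eq_of_exp_eq hlam hη heta, div_div, mul_comm]

theorem isGreatest_gLam_Ici {lam η : ℝ} (hlam : 0 < lam) (h2 : lam < 2) (hη : 0 < η)
    (heta : exp η = 1 + η / lam) :
    IsGreatest (gLam lam '' Ici 0) (gLam lam (η ^ (-lam) / Gamma (2 - lam))) := by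
  have hG := Gamma_two_sub_pos h2
  refine ⟨mem_image_of_mem _ (mem_Ici.2 (by positivity)), ?_⟩
  rintro _ ⟨c, hc, rfl⟩
  rw [gLam_eq_fLam hlam.ne' h2 hc, gLam_eq_fLam hlam.ne' h2 (by positivity),
    gLamArg_rpow_neg_div hlam.ne' h2 hη.le]
  gcongr
  exact isMaxOn_fLam hlam hη heta (rpow_nonneg (mul_nonneg hc hG.le) _)

theorem isGreatest_gLam_Icc_of_le {lam η : ℝ} (hlam : 0 < lam) (h2 : lam < 2) (hη : 0 < η)
    (heta : exp η = 1 + η / lam) (h : gLamArg lam 1 ≤ η) :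
    IsGreatest (gLam lam '' Icc 0 1) (gLam lam (η ^ (-lam) / Gamma (2 - lam))) := by
  have hG := Gamma_two_sub_pos h2
  have hle : η ^ (-lam) ≤ Gamma (2 - lam) := by
    simpa [rpow_gLamArg hlam.ne' h2 zero_le_one] using
      rpow_le_rpow_of_nonpos (gLamArg_pos h2 one_pos) h (neg_nonpos.2 hlam.le)
  have hmax := isGreatest_gLam_Ici hlam h2 hη heta
  exact ⟨mem_image_of_mem _ ⟨by positivity, (div_le_one hG).2 hle⟩,
    upperBounds_mono_set (image_mono Icc_subset_Ici_self) hmax.2⟩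

theorem isGreatest_gLam_one_of_le {lam η : ℝ} (hlam : 0 < lam) (h2 : lam < 2) (hη : 0 < η)
    (heta : exp η = 1 + η / lam) (h : η ≤ gLamArg lam 1) :
    IsGreatest (gLam lam '' Icc 0 1) (gLam lam 1) := by
  refine ⟨mem_image_of_mem _ ⟨zero_le_one, le_rfl⟩, ?_⟩
  rintro _ ⟨c, ⟨hc0, hc1⟩, rfl⟩
  rw [gLam_eq_fLam hlam.ne' h2 hc0, gLam_eq_fLam hlam.ne' h2 zero_le_one]
  gcongr
  rcases hc0.eq_or_lt with rfl | hc0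
  · simpa [gLamArg, fLam, hlam.ne'] using fLam_nonneg lam (hη.le.trans h)
  have hle := gLamArg_le_gLamArg hlam h2 hc0 hc1
  exact (strictAntiOn_fLam hlam hη heta).antitoneOn h (h.trans hle) hle

theorem gLamArg_one_le_of_xi_nonpos {lam η : ℝ} (hη : 0 < η) (heta : exp η = 1 + η / lam)
    (hxi : xi lam ≤ 0) : gLamArg lam 1 ≤ η := by
  by_contra! h
  rw [xi_eq_exp_neg_mul] at hxi
  exact hxi.not_gt (mul_pos (exp_pos _) (sub_pos.2 (one_add_div_lt_exp_of_lt hη heta h)))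

theorem le_gLamArg_one_of_xi_nonneg {lam η : ℝ} (h2 : lam < 2) (heta : exp η = 1 + η / lam)
    (hxi : 0 ≤ xi lam) : η ≤ gLamArg lam 1 := by
  by_contra! h
  rw [xi_eq_exp_neg_mul] at hxi
  exact hxi.not_gt (mul_neg_of_pos_of_neg (exp_pos _)
    (sub_neg.2 (exp_lt_one_add_div_of_lt heta (gLamArg_pos h2 one_pos) h)))

theorem sup_gLam_general (lam : ℝ) (hlam : lam ∈ Set.Ioc (0 : ℝ) 1)
    (lamstar : ℝ)
    (hlsu : ∀ l ∈ Set.Ioc (0 : ℝ) 1, xi l = 0 → l = lamstar)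
    (eta : ℝ) (heta_pos : 0 < eta) (heta : Real.exp eta = 1 + eta / lam) :
    (lam ≤ lamstar →
      sSup (gLam lam '' Set.Icc (0 : ℝ) 1) = sSup (gLam lam '' Set.Ici (0 : ℝ)) ∧
      sSup (gLam lam '' Set.Icc (0 : ℝ) 1) =
        eta ^ (1 - lam) / (Real.Gamma (2 - lam) * (lam + eta))) ∧
    (lamstar ≤ lam →
      sSup (gLam lam '' Set.Icc (0 : ℝ) 1) = gLam lam 1 ∧
      sSup (gLam lam '' Set.Icc (0 : ℝ) 1) =
        1 - Real.exp (-(Real.Gamma (2 - lam) ^ (-(1 : ℝ) / lam)))) := by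
  have hl0 := hlam.1
  have hl2 : lam < 2 := by linarith [hlam.2]
  refine ⟨fun hle => ?_, fun hge => ?_⟩
  · have hu1 := gLamArg_one_le_of_xi_nonpos heta_pos heta (xi_nonpos_of_le hlam hlsu hle)
    rw [(isGreatest_gLam_Icc_of_le hl0 hl2 heta_pos heta hu1).csSup_eq,
      (isGreatest_gLam_Ici hl0 hl2 heta_pos heta).csSup_eq,
      gLam_rpow_neg_div_of_exp_eq hl0 hl2 heta_pos heta]
    exact ⟨rfl, rfl⟩
  · have hu1 := le_gLamArg_one_of_xi_nonneg hl2 heta (xi_nonneg_of_ge hlam hlsu hge)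
    rw [(isGreatest_gLam_one_of_le hl0 hl2 heta_pos heta hu1).csSup_eq, gLam, one_mul, one_mul]
    exact ⟨rfl, rfl⟩

/-- Characterization of `sup_{c ∈ [0,1]} g_λ(c)`: if `0 < λ ≤ λ*`, it equals
`sup_{c ≥ 0} g_λ(c) = η(λ)^{1−λ}/(Γ(2−λ)·(λ + η(λ)))`, where `η(λ)` is the unique
positive solution of `e^x = 1 + x/λ`; if `λ* ≤ λ ≤ 1`, it equals
`g_λ(1) = 1 − e^{−Γ(2−λ)^{−1/λ}}`.  Here `λ*` is the unique root of `ξ` in `(0,1]`. -/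
theorem sup_gLam (lam : ℝ) (hlam : lam ∈ Set.Ioc (0 : ℝ) 1)
    (lamstar : ℝ) (hls : lamstar ∈ Set.Ioc (0 : ℝ) 1) (hls0 : xi lamstar = 0)
    (hlsu : ∀ l ∈ Set.Ioc (0 : ℝ) 1, xi l = 0 → l = lamstar)
    (eta : ℝ) (heta_pos : 0 < eta) (heta : Real.exp eta = 1 + eta / lam)
    (hetau : ∀ y : ℝ, 0 < y → Real.exp y = 1 + y / lam → y = eta) :
    (lam ≤ lamstar →
      sSup (gLam lam '' Set.Icc (0 : ℝ) 1) = sSup (gLam lam '' Set.Ici (0 : ℝ)) ∧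
      sSup (gLam lam '' Set.Icc (0 : ℝ) 1) =
        eta ^ (1 - lam) / (Real.Gamma (2 - lam) * (lam + eta))) ∧
    (lamstar ≤ lam →
      sSup (gLam lam '' Set.Icc (0 : ℝ) 1) = gLam lam 1 ∧
      sSup (gLam lam '' Set.Icc (0 : ℝ) 1) =
        1 - Real.exp (-(Real.Gamma (2 - lam) ^ (-(1 : ℝ) / lam)))) :=
  sup_gLam_general lam hlam lamstar hlsu eta heta_pos heta
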